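/- arXiv:1911.08823 — 6 statements merged into one kernel-verified Lean document; each statement's English description precedes it below -/
import Mathlib

section
/- Let f : ℝ² → ℝ³ be a smooth map, q, q' ∈ ℝ², and φ : ℝ² → ℝ² a smooth map with φ(q') = q whose differential at q' is invertible. Set g = f ∘ φ. Suppose that at q: f_v(q) = 0, f_u(q) ≠ 0, |f_u(q)| = |f_vv(q)| = 1 and ⟨f_u(q), f_vv(q)⟩ = 0; and that at q' (with coordinates (x,y)): g_y(q') = 0, g_x(q') ≠ 0, |g_x(q')| = |g_yy(q')| = 1 and ⟨g_x(q'), g_yy(q')⟩ = 0. Then ⟨f_uu, f_vv⟩(q) − ⟨f_uv, f_vv⟩(q)² = ⟨g_xx, g_yy⟩(q') − ⟨g_xy, g_yy⟩(q')². -/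
noncomputable section

/-- Partial derivative in the first (`u`) variable. -/
def pdu {E : Type*} [NormedAddCommGroup E] [NormedSpace ℝ E]
    (f : ℝ × ℝ → E) : ℝ × ℝ → E := fun x => fderiv ℝ f x (1, 0)

/-- Partial derivative in the second (`v`) variable. -/
def pdv {E : Type*} [NormedAddCommGroup E] [NormedSpace ℝ E]
    (f : ℝ × ℝ → E) : ℝ × ℝ → E := fun x => fderiv ℝ f x (0, 1)

section aux
variable {E : Type*} [NormedAddCommGroup E] [NormedSpace ℝ E]

lemma fderiv_fderiv_apply (h : ℝ × ℝ → E) (hh : ContDiff ℝ (⊤ : ℕ∞) h) (x v w : ℝ × ℝ) :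
    fderiv ℝ (fun y => fderiv ℝ h y v) x w = fderiv ℝ (fderiv ℝ h) x w v := by
  have hd : DifferentiableAt ℝ (fderiv ℝ h) x :=
    ((hh.fderiv_right (m := (⊤ : ℕ∞)) (by simp)).differentiable (by simp)) x
  have := fderiv_clm_apply (𝕜 := ℝ) (c := fderiv ℝ h) (u := fun _ => v) hd
    (differentiableAt_const v)
  simp only [fderiv_fun_const, Pi.zero_apply] at this
  rw [this]
  simp

lemma clm_prod (L : ℝ × ℝ →L[ℝ] E) (v : ℝ × ℝ) :
    L v = v.1 • L (1, 0) + v.2 • L (0, 1) := by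
  have : v = v.1 • ((1:ℝ), (0:ℝ)) + v.2 • ((0:ℝ), (1:ℝ)) := by
    ext <;> simp
  conv_lhs => rw [this]
  rw [map_add, map_smul, map_smul]

lemma snd_chain (f : ℝ × ℝ → E) (hf : ContDiff ℝ (⊤ : ℕ∞) f) (φ : ℝ × ℝ → ℝ × ℝ)
    (hφ : ContDiff ℝ (⊤ : ℕ∞) φ) (q' : ℝ × ℝ) (w z : ℝ × ℝ) :
    fderiv ℝ (fderiv ℝ (f ∘ φ)) q' w z =
      fderiv ℝ (fderiv ℝ f) (φ q') (fderiv ℝ φ q' w) (fderiv ℝ φ q' z)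
      + fderiv ℝ f (φ q') (fderiv ℝ (fderiv ℝ φ) q' w z) := by
  have hfd := hf.differentiable (by simp)
  have hφd := hφ.differentiable (by simp)
  have hF : ContDiff ℝ (⊤ : ℕ∞) (fderiv ℝ f) := hf.fderiv_right (by simp)
  have hΦ : ContDiff ℝ (⊤ : ℕ∞) (fderiv ℝ φ) := hφ.fderiv_right (by simp)
  set C := ContinuousLinearMap.compL ℝ (ℝ × ℝ) (ℝ × ℝ) E with hC
  have hCd : DifferentiableAt ℝ C (fderiv ℝ f (φ q')) := ContinuousLinearMap.differentiableAt (𝕜 := ℝ)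
    (E := (ℝ × ℝ) →L[ℝ] E) (F := ((ℝ × ℝ) →L[ℝ] (ℝ × ℝ)) →L[ℝ] ((ℝ × ℝ) →L[ℝ] E)) C
    (x := fderiv ℝ f (φ q'))
  have heq : fderiv ℝ (f ∘ φ) = fun x => (C (fderiv ℝ f (φ x))) (fderiv ℝ φ x) := by
    funext x
    rw [fderiv_comp (x := x) (hfd _) (hφd _)]
    rfl
  have hFφ : DifferentiableAt ℝ (fun x => fderiv ℝ f (φ x)) q' :=
    ((hF.differentiable (by simp)) (φ q')).comp q' (hφd q')
  have hc : DifferentiableAt ℝ (fun x => C (fderiv ℝ f (φ x))) q' :=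
    DifferentiableAt.comp (𝕜 := ℝ) (g := ⇑C) (f := fun x => fderiv ℝ f (φ x)) q' hCd hFφ
  have hu : DifferentiableAt ℝ (fderiv ℝ φ) q' := (hΦ.differentiable (by simp)) q'
  have key := fderiv_clm_apply (𝕜 := ℝ) (c := fun x => C (fderiv ℝ f (φ x)))
    (u := fderiv ℝ φ) hc hu
  have hcder : fderiv ℝ (fun x => C (fderiv ℝ f (φ x))) q'
      = C.comp (fderiv ℝ (fun x => fderiv ℝ f (φ x)) q') := by
    have h2 := fderiv_comp (𝕜 := ℝ) (g := ⇑C) (f := fun x => fderiv ℝ f (φ x)) (x := q') hCd hFφ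
    rw [Function.comp_def] at h2
    rw [h2, ContinuousLinearMap.fderiv]
  have hFφder : fderiv ℝ (fun x => fderiv ℝ f (φ x)) q'
      = (fderiv ℝ (fderiv ℝ f) (φ q')).comp (fderiv ℝ φ q') := by
    have h3 := fderiv_comp (𝕜 := ℝ) (g := fderiv ℝ f) (f := φ) (x := q')
      ((hF.differentiable (by simp)) (φ q')) (hφd q')
    rw [Function.comp_def] at h3
    exact h3
  rw [heq, key, hcder, hFφder]
  simp [C]
  exact add_comm _ _

end aux

/-- The quantity `⟨f_uu, f_vv⟩ − ⟨f_uv, f_vv⟩²` (the axial curvature) is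
independent of the choice of coordinate system normalized so that `f_v = 0`, `f_u ≠ 0`,
`|f_u| = |f_vv| = 1` and `⟨f_u, f_vv⟩ = 0` at the singular point. -/
theorem stmt2 (f : ℝ × ℝ → EuclideanSpace ℝ (Fin 3)) (hf : ContDiff ℝ (⊤ : ℕ∞) f)
    (q q' : ℝ × ℝ) (φ : ℝ × ℝ → ℝ × ℝ) (hφ : ContDiff ℝ (⊤ : ℕ∞) φ)
    (hφq : φ q' = q) (hdφ : Function.Bijective (fderiv ℝ φ q'))
    (g : ℝ × ℝ → EuclideanSpace ℝ (Fin 3)) (hg : g = f ∘ φ)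
    (h1 : pdv f q = 0) (h2 : pdu f q ≠ 0)
    (h3 : ‖pdu f q‖ = 1) (h4 : ‖pdv (pdv f) q‖ = 1)
    (h5 : (inner ℝ (pdu f q) (pdv (pdv f) q) : ℝ) = 0)
    (h1' : pdv g q' = 0) (h2' : pdu g q' ≠ 0)
    (h3' : ‖pdu g q'‖ = 1) (h4' : ‖pdv (pdv g) q'‖ = 1)
    (h5' : (inner ℝ (pdu g q') (pdv (pdv g) q') : ℝ) = 0) :
    (inner ℝ (pdu (pdu f) q) (pdv (pdv f) q) : ℝ) -
        ((inner ℝ (pdv (pdu f) q) (pdv (pdv f) q) : ℝ)) ^ 2 =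
      (inner ℝ (pdu (pdu g) q') (pdv (pdv g) q') : ℝ) -
        ((inner ℝ (pdv (pdu g) q') (pdv (pdv g) q') : ℝ)) ^ 2 := by
  subst hg
  have epu : ∀ (h : ℝ × ℝ → EuclideanSpace ℝ (Fin 3)), pdu h = fun x => fderiv ℝ h x (1, 0) :=
    fun _ => rfl
  have epv : ∀ (h : ℝ × ℝ → EuclideanSpace ℝ (Fin 3)), pdv h = fun x => fderiv ℝ h x (0, 1) :=
    fun _ => rfl
  simp only [epu, epv] at h1 h2 h3 h4 h5 h1' h2' h3' h4' h5' ⊢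
  have hfd := hf.differentiable (by simp)
  have hφd := hφ.differentiable (by simp)
  have hgc : ContDiff ℝ (⊤ : ℕ∞) (f ∘ φ) := hf.comp hφ
  have hF : ContDiff ℝ (⊤ : ℕ∞) (fderiv ℝ f) := hf.fderiv_right (by simp)
  set A := fderiv ℝ φ q' with hAdef
  set B := fderiv ℝ (fderiv ℝ f) q with hBdef
  set Bp := fderiv ℝ (fderiv ℝ φ) q' with hBpdef
  -- first-order chain rule
  have Hc1 : ∀ v, fderiv ℝ (f ∘ φ) q' v = fderiv ℝ f q (A v) := by
    intro v
    rw [fderiv_comp (x := q') (hfd _) (hφd _), hφq]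
    rfl
  -- second derivative evaluations
  have Hf2 : ∀ v w : ℝ × ℝ, fderiv ℝ (fun x => fderiv ℝ f x v) q w = B w v :=
    fun v w => fderiv_fderiv_apply f hf q v w
  have Hg2 : ∀ v w : ℝ × ℝ, fderiv ℝ (fun x => fderiv ℝ (f ∘ φ) x v) q' w
      = B (A w) (A v) + fderiv ℝ f q (Bp w v) := by
    intro v w
    rw [fderiv_fderiv_apply (f ∘ φ) hgc q' v w, snd_chain f hf φ hφ q' w v, hφq]
  set a := (A (1, 0)).1 with hadef
  set c := (A (1, 0)).2 with hcdef
  set b := (A (0, 1)).1 with hbdef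
  set d := (A (0, 1)).2 with hddef
  -- basic facts on the f side
  rw [Hf2] at h4 h5
  have hfufu : (inner ℝ (fderiv ℝ f q (1, 0)) (fderiv ℝ f q (1, 0)) : ℝ) = 1 := by
    rw [real_inner_self_eq_norm_mul_norm, h3]; norm_num
  have hvvvv : (inner ℝ (B (0, 1) (0, 1)) (B (0, 1) (0, 1)) : ℝ) = 1 := by
    rw [real_inner_self_eq_norm_mul_norm, h4]; norm_num
  -- b = 0
  have hb : b = 0 := by
    have e : fderiv ℝ (f ∘ φ) q' (0, 1) = b • fderiv ℝ f q (1, 0) := by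
      rw [Hc1, clm_prod (fderiv ℝ f q) (A (0, 1)), h1]
      simp [hbdef]
    rw [h1'] at e
    rcases smul_eq_zero.mp e.symm with h | h
    · exact h
    · exact absurd h h2
  -- gx = a • fu
  have hgx : fderiv ℝ (f ∘ φ) q' (1, 0) = a • fderiv ℝ f q (1, 0) := by
    rw [Hc1, clm_prod (fderiv ℝ f q) (A (1, 0)), h1]
    simp [hadef]
  -- a^2 = 1
  have ha2 : a * a = 1 := by
    rw [hgx, norm_smul, h3, Real.norm_eq_abs] at h3'
    have : |a| = 1 := by simpa using h3'
    calc a * a = |a| * |a| := (abs_mul_abs_self a).symm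
    _ = 1 := by rw [this]; norm_num
  have ha0 : a ≠ 0 := by
    intro h; rw [h] at ha2; norm_num at ha2
  -- gyy
  have hgyy : fderiv ℝ (fun x => fderiv ℝ (f ∘ φ) x (0, 1)) q' (0, 1)
      = (d * d) • B (0, 1) (0, 1) + (Bp (0, 1) (0, 1)).1 • fderiv ℝ f q (1, 0) := by
    rw [Hg2]
    rw [clm_prod B (A (0, 1))]
    rw [clm_prod (fderiv ℝ f q) (Bp (0, 1) (0, 1))]
    rw [ContinuousLinearMap.add_apply, ContinuousLinearMap.smul_apply,
      ContinuousLinearMap.smul_apply]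
    rw [clm_prod (B (0, 1)) (A (0, 1))]
    rw [← hbdef, ← hddef, hb, h1]
    simp [smul_smul]
  -- p22 = 0
  have hp22 : (Bp (0, 1) (0, 1)).1 = 0 := by
    rw [hgx, hgyy] at h5'
    simp only [inner_add_right, real_inner_smul_left, real_inner_smul_right,
      hfufu, h5] at h5'
    have : a * (Bp (0, 1) (0, 1)).1 = 0 := by linarith [h5']
    rcases mul_eq_zero.mp this with h | h
    · exact absurd h ha0
    · exact h
  have hgyy2 : fderiv ℝ (fun x => fderiv ℝ (f ∘ φ) x (0, 1)) q' (0, 1)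
      = (d * d) • B (0, 1) (0, 1) := by
    rw [hgyy, hp22]; simp
  -- d^2 = 1
  have hd2 : d * d = 1 := by
    rw [hgyy2, norm_smul, h4, Real.norm_eq_abs, abs_of_nonneg (mul_self_nonneg d)] at h4'
    simpa using h4'
  -- gxy
  have hgxy : fderiv ℝ (fun x => fderiv ℝ (f ∘ φ) x (1, 0)) q' (0, 1)
      = (d * a) • B (0, 1) (1, 0) + (d * c) • B (0, 1) (0, 1)
        + (Bp (0, 1) (1, 0)).1 • fderiv ℝ f q (1, 0) := by
    rw [Hg2]
    rw [clm_prod B (A (0, 1))]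
    rw [clm_prod (fderiv ℝ f q) (Bp (0, 1) (1, 0))]
    rw [ContinuousLinearMap.add_apply, ContinuousLinearMap.smul_apply,
      ContinuousLinearMap.smul_apply]
    rw [clm_prod (B (0, 1)) (A (1, 0))]
    rw [← hbdef, ← hddef, ← hadef, ← hcdef, hb, h1]
    simp [smul_smul, smul_add, add_assoc]
  -- gxx
  have hgxx : fderiv ℝ (fun x => fderiv ℝ (f ∘ φ) x (1, 0)) q' (1, 0)
      = (a * a) • B (1, 0) (1, 0) + (a * c) • B (1, 0) (0, 1)
        + (c * a) • B (0, 1) (1, 0) + (c * c) • B (0, 1) (0, 1)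
        + (Bp (1, 0) (1, 0)).1 • fderiv ℝ f q (1, 0) := by
    rw [Hg2]
    rw [clm_prod B (A (1, 0))]
    rw [clm_prod (fderiv ℝ f q) (Bp (1, 0) (1, 0))]
    rw [ContinuousLinearMap.add_apply, ContinuousLinearMap.smul_apply,
      ContinuousLinearMap.smul_apply]
    rw [clm_prod (B (1, 0)) (A (1, 0))]
    rw [clm_prod (B (0, 1)) (A (1, 0))]
    rw [← hadef, ← hcdef, h1]
    simp [smul_smul, smul_add, add_assoc]
  -- symmetry of second derivative of f
  have hsym : B (1, 0) (0, 1) = B (0, 1) (1, 0) := by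
    exact second_derivative_symmetric (fun y => (hfd y).hasFDerivAt)
      ((hF.differentiable (by simp) q).hasFDerivAt) (1, 0) (0, 1)
  -- final computation
  rw [Hf2, Hf2, Hf2, hgxx, hgxy, hgyy2, hsym]
  simp only [inner_add_left, real_inner_smul_left, real_inner_smul_right,
    hvvvv, h5]
  rcases mul_self_eq_one_iff.mp ha2 with h | h <;>
    rcases mul_self_eq_one_iff.mp hd2 with h' | h' <;>
      rw [h, h'] <;> ring
end
end

section
/- Let f : ℝ² → ℝ³ be a smooth map in Monge form at 0, i.e. f(u,v) = (u, f₂(u,v), f₃(u,v)) with all first partial derivatives of f₂ and f₃ vanishing at the origin. Set a20 = (f₂)_uu(0), a11 = (f₂)_uv(0), a02 = (f₂)_vv(0), b20 = (f₃)_uu(0), b11 = (f₃)_uv(0), b02 = (f₃)_vv(0), and suppose a02² + b02² > 0. Then A(f,0) = (1/√(a02² + b02²))·((a20·a02 + b20·b02) − (a11·a02 + b11·b02)²/(a02² + b02²)), where A(f,0) = (⟨f_u,f_u⟩·(⟨f_u,f_u⟩⟨f_vv,f_vv⟩ − ⟨f_u,f_vv⟩²))^{−3/2} · ((⟨f_u,f_uu⟩⟨f_u,f_vv⟩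 − ⟨f_u,f_u⟩⟨f_uu,f_vv⟩)·(⟨f_u,f_vv⟩² − ⟨f_u,f_u⟩⟨f_vv,f_vv⟩) − (⟨f_u,f_uv⟩⟨f_u,f_vv⟩ − ⟨f_u,f_u⟩⟨f_uv,f_vv⟩)²), all derivatives evaluated at 0. -/
noncomputable section

/-- The coordinate expression `A(f,q)` for the axial curvature of the corank-1
singular surface parametrized by `f` at `q` (all derivatives evaluated at `q`). -/
def axialA (f : ℝ × ℝ → EuclideanSpace ℝ (Fin 3)) (q : ℝ × ℝ) : ℝ :=
  let fu := pdu f q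
  let fuu := pdu (pdu f) q
  let fuv := pdv (pdu f) q
  let fvv := pdv (pdv f) q
  ((inner ℝ fu fu : ℝ) * ((inner ℝ fu fu : ℝ) * (inner ℝ fvv fvv : ℝ) -
      (inner ℝ fu fvv : ℝ) ^ 2)) ^ (-(3 : ℝ) / 2) *
    (((inner ℝ fu fuu : ℝ) * (inner ℝ fu fvv : ℝ) -
        (inner ℝ fu fu : ℝ) * (inner ℝ fuu fvv : ℝ)) *
      ((inner ℝ fu fvv : ℝ) ^ 2 - (inner ℝ fu fu : ℝ) * (inner ℝ fvv fvv : ℝ)) -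
      ((inner ℝ fu fuv : ℝ) * (inner ℝ fu fvv : ℝ) -
        (inner ℝ fu fu : ℝ) * (inner ℝ fuv fvv : ℝ)) ^ 2)

/-- The point of `ℝ³` (as `EuclideanSpace ℝ (Fin 3)`) with coordinates `(a, b, c)`. -/
def e3 (a b c : ℝ) : EuclideanSpace ℝ (Fin 3) :=
  (WithLp.equiv 2 (Fin 3 → ℝ)).symm ![a, b, c]

lemma inner_e3 (a b c a' b' c' : ℝ) :
    (inner ℝ (e3 a b c) (e3 a' b' c') : ℝ) = a * a' + b * b' + c * c' := by
  simp [e3, PiLp.inner_apply, Fin.sum_univ_three, WithLp.equiv_symm_apply]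
  ring

lemma comb_e3 (a b c : ℝ) :
    a • e3 1 0 0 + b • e3 0 1 0 + c • e3 0 0 1 = e3 a b c := by
  ext i; fin_cases i <;> simp [e3, WithLp.equiv_symm_apply]

lemma comb_e3' (a b : ℝ) :
    a • e3 0 1 0 + b • e3 0 0 1 = e3 0 a b := by
  ext i; fin_cases i <;> simp [e3, WithLp.equiv_symm_apply]

lemma pd_tri (w : ℝ × ℝ) (g1 g2 g3 : ℝ × ℝ → ℝ) (h1 : Differentiable ℝ g1)
    (h2 : Differentiable ℝ g2) (h3 : Differentiable ℝ g3)
    (c1 c2 c3 : EuclideanSpace ℝ (Fin 3)) (q : ℝ × ℝ) :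
    fderiv ℝ (fun x => g1 x • c1 + g2 x • c2 + g3 x • c3) q w
      = (fderiv ℝ g1 q w) • c1 + (fderiv ℝ g2 q w) • c2 + (fderiv ℝ g3 q w) • c3 := by
  rw [fderiv_fun_add (((h1 q).smul_const c1).fun_add ((h2 q).smul_const c2)) ((h3 q).smul_const c3),
    fderiv_fun_add ((h1 q).smul_const c1) ((h2 q).smul_const c2),
    fderiv_smul_const (h1 q), fderiv_smul_const (h2 q), fderiv_smul_const (h3 q)]
  simp

set_option maxHeartbeats 1000000 in
/-- For a smooth map in Monge form `f(u,v) = (u, f₂(u,v), f₃(u,v))` with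
the first partial derivatives of `f₂, f₃` vanishing at the origin and
`a02² + b02² > 0`, the coordinate formula `A(f,0)` equals the Monge-form formula for
the axial curvature. -/
theorem stmt4 (f₂ f₃ : ℝ × ℝ → ℝ) (hf₂ : ContDiff ℝ (⊤ : ℕ∞) f₂) (hf₃ : ContDiff ℝ (⊤ : ℕ∞) f₃)
    (f : ℝ × ℝ → EuclideanSpace ℝ (Fin 3))
    (hf : ∀ x : ℝ × ℝ, f x = e3 x.1 (f₂ x) (f₃ x))
    (h2 : fderiv ℝ f₂ (0, 0) = 0) (h3 : fderiv ℝ f₃ (0, 0) = 0)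
    (a20 a11 a02 b20 b11 b02 : ℝ)
    (ha20 : a20 = pdu (pdu f₂) (0, 0)) (ha11 : a11 = pdv (pdu f₂) (0, 0))
    (ha02 : a02 = pdv (pdv f₂) (0, 0))
    (hb20 : b20 = pdu (pdu f₃) (0, 0)) (hb11 : b11 = pdv (pdu f₃) (0, 0))
    (hb02 : b02 = pdv (pdv f₃) (0, 0))
    (hpos : a02 ^ 2 + b02 ^ 2 > 0) :
    axialA f (0, 0) = (1 / Real.sqrt (a02 ^ 2 + b02 ^ 2)) *
      ((a20 * a02 + b20 * b02) - (a11 * a02 + b11 * b02) ^ 2 / (a02 ^ 2 + b02 ^ 2)) := by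
  have hd2 : Differentiable ℝ f₂ := hf₂.differentiable (by simp)
  have hd3 : Differentiable ℝ f₃ := hf₃.differentiable (by simp)
  have hdu2 : Differentiable ℝ (pdu f₂) :=
    (((hf₂.fderiv_right (by simp)).clm_apply contDiff_const :
      ContDiff ℝ (⊤ : ℕ∞) fun q => fderiv ℝ f₂ q (1, 0))).differentiable (by simp)
  have hdv2 : Differentiable ℝ (pdv f₂) :=
    (((hf₂.fderiv_right (by simp)).clm_apply contDiff_const :
      ContDiff ℝ (⊤ : ℕ∞) fun q => fderiv ℝ f₂ q (0, 1))).differentiable (by simp)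
  have hdu3 : Differentiable ℝ (pdu f₃) :=
    (((hf₃.fderiv_right (by simp)).clm_apply contDiff_const :
      ContDiff ℝ (⊤ : ℕ∞) fun q => fderiv ℝ f₃ q (1, 0))).differentiable (by simp)
  have hdv3 : Differentiable ℝ (pdv f₃) :=
    (((hf₃.fderiv_right (by simp)).clm_apply contDiff_const :
      ContDiff ℝ (⊤ : ℕ∞) fun q => fderiv ℝ f₃ q (0, 1))).differentiable (by simp)
  have hfeq : f = fun x => x.1 • e3 1 0 0 + f₂ x • e3 0 1 0 + f₃ x • e3 0 0 1 :=
    funext fun x => by rw [hf x, comb_e3]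
  -- first-order partial derivatives of `f`
  have hfu : pdu f = fun q => (1 : ℝ) • e3 1 0 0 + pdu f₂ q • e3 0 1 0 + pdu f₃ q • e3 0 0 1 := by
    funext q
    show fderiv ℝ f q (1, 0) = _
    rw [hfeq, pd_tri (1, 0) _ _ _ differentiable_fst hd2 hd3, fderiv_fst]
    rfl
  have hfv : pdv f = fun q => (0 : ℝ) • e3 1 0 0 + pdv f₂ q • e3 0 1 0 + pdv f₃ q • e3 0 0 1 := by
    funext q
    show fderiv ℝ f q (0, 1) = _
    rw [hfeq, pd_tri (0, 1) _ _ _ differentiable_fst hd2 hd3, fderiv_fst]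
    rfl
  have e2u : pdu f₂ (0, 0) = 0 := by
    show fderiv ℝ f₂ (0, 0) (1, 0) = 0
    rw [h2]; rfl
  have e3u : pdu f₃ (0, 0) = 0 := by
    show fderiv ℝ f₃ (0, 0) (1, 0) = 0
    rw [h3]; rfl
  -- the four derivative vectors at the origin
  have hFu : pdu f (0, 0) = e3 1 0 0 := by
    simp only [hfu]
    rw [e2u, e3u, comb_e3]
  have hFuu : pdu (pdu f) (0, 0) = e3 0 a20 b20 := by
    show fderiv ℝ (pdu f) (0, 0) (1, 0) = _
    rw [hfu, pd_tri (1, 0) _ _ _ (differentiable_const _) hdu2 hdu3, fderiv_fun_const,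
      ha20, hb20]
    simp only [pdu]
    simp [comb_e3']
  have hFuv : pdv (pdu f) (0, 0) = e3 0 a11 b11 := by
    show fderiv ℝ (pdu f) (0, 0) (0, 1) = _
    rw [hfu, pd_tri (0, 1) _ _ _ (differentiable_const _) hdu2 hdu3, fderiv_fun_const,
      ha11, hb11]
    simp only [pdv, pdu]
    simp [comb_e3']
  have hFvv : pdv (pdv f) (0, 0) = e3 0 a02 b02 := by
    show fderiv ℝ (pdv f) (0, 0) (0, 1) = _
    rw [hfv, pd_tri (0, 1) _ _ _ (differentiable_const _) hdv2 hdv3, fderiv_fun_const,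
      ha02, hb02]
    simp only [pdv]
    simp [comb_e3']
  -- conclude by computing the inner products
  simp only [axialA, hFuu, hFuv, hFvv, hFu, inner_e3]
  norm_num
  have hX0 : (0:ℝ) < a02^2 + b02^2 := hpos
  have hS : Real.sqrt (a02^2+b02^2) ≠ 0 := (Real.sqrt_pos.mpr hX0).ne'
  have hb : a02*a02 + b02*b02 = a02^2+b02^2 := by ring
  rw [hb]
  have hrp : (a02^2+b02^2 : ℝ) ^ (-(3/2) : ℝ)
      = 1/((a02^2+b02^2) * Real.sqrt (a02^2+b02^2)) := by
    rw [show (-(3/2) : ℝ) = -(1 + 1/2) by norm_num, Real.rpow_neg hX0.le,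
      Real.rpow_add hX0, Real.rpow_one, ← Real.sqrt_eq_rpow, one_div]
  rw [hrp]
  have hss : Real.sqrt (a02^2+b02^2) * Real.sqrt (a02^2+b02^2) = a02^2+b02^2 :=
    Real.mul_self_sqrt hX0.le
  field_simp
  nlinarith [hss, sq_nonneg (Real.sqrt (a02^2+b02^2))]
end
end

section
/- Let f : ℝ² → ℝ³ be a smooth map and q a point with f_v(q) = 0, f_uv(q) = 0, f_u(q) ≠ 0, and f_u(q) × f_vv(q) ≠ 0 (cross product in ℝ³). Let ν = (f_u × f_vv)/|f_u × f_vv| at q. Then det(f_u(q), f_uu(q), ν)/|f_u(q)|³ = A(f,q), where A(f,q) = (⟨f_u,f_u⟩·(⟨f_u,f_u⟩⟨f_vv,f_vv⟩ − ⟨f_u,f_vv⟩²))^{−3/2} · ((⟨f_u,f_uu⟩⟨f_u,f_vv⟩ − ⟨f_u,f_u⟩⟨f_uu,f_vv⟩)·(⟨f_u,f_vv⟩² − ⟨f_u,f_u⟩⟨f_vv,f_vv⟩) − (⟨f_u,f_uv⟩⟨f_u,f_vv⟩ − ⟨f_u,f_u⟩⟨f_uv,f_vv⟩)²), all derivatives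 evaluated at q. In particular the absolute values of the singular curvature and the axial curvature coincide. -/
noncomputable section

/-- The cross product on `ℝ³` (as `EuclideanSpace ℝ (Fin 3)`). -/
def cross3 (x y : EuclideanSpace ℝ (Fin 3)) : EuclideanSpace ℝ (Fin 3) :=
  e3 (x 1 * y 2 - x 2 * y 1) (x 2 * y 0 - x 0 * y 2) (x 0 * y 1 - x 1 * y 0)

/-- The determinant of three vectors of `ℝ³`. -/
def det3 (a b c : EuclideanSpace ℝ (Fin 3)) : ℝ :=
  Matrix.det (Matrix.of ![fun i => a i, fun i => b i, fun i => c i])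

/-- In adapted coordinates for a frontal (`f_v(q) = 0`, `f_uv(q) = 0`,
`f_u(q) ≠ 0`, `f_u(q) × f_vv(q) ≠ 0`), with unit normal `ν = (f_u × f_vv)/|f_u × f_vv|`,
the singular-curvature expression `det(f_u, f_uu, ν)/|f_u|³` equals `A(f,q)`; in
particular the absolute values of the singular and axial curvatures coincide. -/
theorem stmt7 (f : ℝ × ℝ → EuclideanSpace ℝ (Fin 3)) (hf : ContDiff ℝ (⊤ : ℕ∞) f)
    (q : ℝ × ℝ) (h1 : pdv f q = 0) (h2 : pdv (pdu f) q = 0) (h3 : pdu f q ≠ 0)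
    (h4 : cross3 (pdu f q) (pdv (pdv f) q) ≠ 0)
    (ν : EuclideanSpace ℝ (Fin 3))
    (hν : ν = ‖cross3 (pdu f q) (pdv (pdv f) q)‖⁻¹ • cross3 (pdu f q) (pdv (pdv f) q)) :
    det3 (pdu f q) (pdu (pdu f) q) ν / ‖pdu f q‖ ^ 3 = axialA f q := by
  set a := pdu f q with ha
  set b := pdu (pdu f) q with hb
  set c := pdv (pdv f) q with hc
  set w := cross3 a c with hw
  have hspos : (0:ℝ) < ‖a‖ := norm_pos_iff.mpr h3
  have htpos : (0:ℝ) < ‖w‖ := norm_pos_iff.mpr h4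
  -- Lagrange identity
  have hLag : (inner ℝ a a : ℝ) * inner ℝ c c - (inner ℝ a c : ℝ) ^ 2 = ‖w‖ ^ 2 := by
    rw [← real_inner_self_eq_norm_sq]
    simp only [hw, cross3, e3, PiLp.inner_apply, Fin.sum_univ_three, RCLike.inner_apply,
      starRingEnd_apply, star_trivial, WithLp.equiv_symm_apply, WithLp.ofLp_toLp, Matrix.cons_val_zero,
      Matrix.cons_val_one, Matrix.head_cons, Matrix.cons_val_two, Matrix.tail_cons]
    ring
  have hdetsmul : det3 a b (‖w‖⁻¹ • w) = ‖w‖⁻¹ * det3 a b w := by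
    simp only [det3, Matrix.det_fin_three, Matrix.of_apply, Matrix.cons_val', Matrix.cons_val_zero,
      Matrix.cons_val_one, Matrix.head_cons, Matrix.cons_val_two, Matrix.tail_cons,
      Matrix.empty_val', Matrix.cons_val_fin_one, Matrix.head_fin_const, PiLp.smul_apply,
      smul_eq_mul]
    ring
  have hdetw : det3 a b w = (inner ℝ a a : ℝ) * inner ℝ b c - (inner ℝ a c : ℝ) * inner ℝ a b := by
    simp only [hw, det3, cross3, e3, Matrix.det_fin_three, Matrix.of_apply, Matrix.cons_val',
      Matrix.cons_val_zero, Matrix.cons_val_one, Matrix.head_cons, Matrix.cons_val_two,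
      Matrix.tail_cons, Matrix.empty_val', Matrix.cons_val_fin_one, Matrix.head_fin_const,
      WithLp.equiv_symm_apply, WithLp.ofLp_toLp, PiLp.inner_apply, Fin.sum_univ_three, RCLike.inner_apply,
      starRingEnd_apply, star_trivial]
    ring
  have hS : (inner ℝ a a : ℝ) = ‖a‖ ^ 2 := real_inner_self_eq_norm_sq a
  -- the rpow part
  have hx : (0:ℝ) ≤ ‖a‖ * ‖w‖ := by positivity
  have hbase : (inner ℝ a a : ℝ) * ((inner ℝ a a : ℝ) * inner ℝ c c - (inner ℝ a c : ℝ) ^ 2)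
      = (‖a‖ * ‖w‖) ^ 2 := by rw [hLag, hS]; ring
  have hrpow : ((‖a‖ * ‖w‖) ^ 2 : ℝ) ^ (-(3:ℝ)/2) = ((‖a‖ * ‖w‖) ^ 3)⁻¹ := by
    rw [← Real.rpow_natCast (‖a‖ * ‖w‖) 2, ← Real.rpow_mul hx,
      show ((2:ℕ):ℝ) * (-(3:ℝ)/2) = -(3:ℝ) by norm_num, Real.rpow_neg hx,
      show (3:ℝ) = ((3:ℕ):ℝ) by norm_num, Real.rpow_natCast]
  simp only [axialA, ← ha, ← hb, ← hc, h2, inner_zero_right, inner_zero_left, mul_zero,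
    zero_mul, sub_zero, zero_sub, zero_pow, ne_eq, OfNat.ofNat_ne_zero, not_false_eq_true,
    neg_zero]
  rw [hν, hdetsmul, hdetw, hbase, hrpow]
  have h1 : ((inner ℝ a c : ℝ) ^ 2 - (inner ℝ a a : ℝ) * inner ℝ c c) = -‖w‖ ^ 2 := by
    rw [← hLag]; ring
  rw [h1, hS]
  have hs := hspos.ne'
  have ht := htpos.ne'
  field_simp
  ring
end
end

section
/- Let f : ℝ² → ℝ³ be a smooth map and q a point with f_v(q) = 0, f_uv(q) = 0, f_u(q) ≠ 0, and f_u(q) × f_vv(q) ≠ 0. Define the normal component f_uu^⊥(q) = f_uu(q) − (⟨f_uu(q), f_u(q)⟩/⟨f_u(q), f_u(q)⟩)·f_u(q). Then A(f,q) = 0 if and only if f_uu^⊥(q) is a scalar multiple of f_u(q) × f_vv(q) (equivalently, if and only if ⟨f_uu^⊥(q), f_vv(q)⟩ = 0), where A(f,q) = (⟨f_u,f_u⟩·(⟨f_u,f_u⟩⟨f_vv,f_vv⟩ − ⟨f_u,f_vv⟩²))^{−3/2} · ((⟨f_u,f_uu⟩⟨f_u,f_vv⟩ − ⟨f_u,f_u⟩⟨f_uu,f_vv⟩)·(⟨f_u,f_vv⟩²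 − ⟨f_u,f_u⟩⟨f_vv,f_vv⟩) − (⟨f_u,f_uv⟩⟨f_u,f_vv⟩ − ⟨f_u,f_u⟩⟨f_uv,f_vv⟩)²) at q. -/
noncomputable section

lemma inner3 (x y : EuclideanSpace ℝ (Fin 3)) :
    (inner ℝ x y : ℝ) = x 0 * y 0 + x 1 * y 1 + x 2 * y 2 := by
  simp [PiLp.inner_apply, Fin.sum_univ_three, RCLike.inner_apply, mul_comm]

lemma aux_perp (u0 u1 u2 w0 w1 w2 x0 x1 x2 n0 n1 n2 : ℝ)
    (hn0 : n0 = u1*w2 - u2*w1) (hn1 : n1 = u2*w0 - u0*w2) (hn2 : n2 = u0*w1 - u1*w0)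
    (hu : x0*u0 + x1*u1 + x2*u2 = 0) (hw : x0*w0 + x1*w1 + x2*w2 = 0) :
    (n0^2+n1^2+n2^2) * x0 = (x0*n0+x1*n1+x2*n2) * n0 ∧
    (n0^2+n1^2+n2^2) * x1 = (x0*n0+x1*n1+x2*n2) * n1 ∧
    (n0^2+n1^2+n2^2) * x2 = (x0*n0+x1*n1+x2*n2) * n2 := by
  subst hn0 hn1 hn2
  refine ⟨?_, ?_, ?_⟩
  · linear_combination ((u2*w0 - u0*w2)*u2 - (u0*w1 - u1*w0)*u1) * hw -
      ((u2*w0 - u0*w2)*w2 - (u0*w1 - u1*w0)*w1) * hu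
  · linear_combination ((u0*w1 - u1*w0)*u0 - (u1*w2 - u2*w1)*u2) * hw -
      ((u0*w1 - u1*w0)*w0 - (u1*w2 - u2*w1)*w2) * hu
  · linear_combination ((u1*w2 - u2*w1)*u1 - (u2*w0 - u0*w2)*u0) * hw -
      ((u1*w2 - u2*w1)*w1 - (u2*w0 - u0*w2)*w0) * hu

/-- In adapted coordinates for a frontal, with normal component
`f_uu^⊥ = f_uu − (⟨f_uu,f_u⟩/⟨f_u,f_u⟩)·f_u`, the axial curvature `A(f,q)` vanishes iff
`f_uu^⊥(q)` is a scalar multiple of `f_u(q) × f_vv(q)`, equivalently iff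
`⟨f_uu^⊥(q), f_vv(q)⟩ = 0`. -/
theorem stmt8 (f : ℝ × ℝ → EuclideanSpace ℝ (Fin 3)) (hf : ContDiff ℝ (⊤ : ℕ∞) f)
    (q : ℝ × ℝ) (h1 : pdv f q = 0) (h2 : pdv (pdu f) q = 0) (h3 : pdu f q ≠ 0)
    (h4 : cross3 (pdu f q) (pdv (pdv f) q) ≠ 0)
    (fuuP : EuclideanSpace ℝ (Fin 3))
    (hfuuP : fuuP = pdu (pdu f) q -
      ((inner ℝ (pdu (pdu f) q) (pdu f q) : ℝ) / (inner ℝ (pdu f q) (pdu f q) : ℝ)) • pdu f q) :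
    (axialA f q = 0 ↔ ∃ c : ℝ, fuuP = c • cross3 (pdu f q) (pdv (pdv f) q)) ∧
      ((∃ c : ℝ, fuuP = c • cross3 (pdu f q) (pdv (pdv f) q)) ↔
        (inner ℝ fuuP (pdv (pdv f) q) : ℝ) = 0) := by
  set u := pdu f q with hu_def
  set w := pdv (pdv f) q with hw_def
  set a := pdu (pdu f) q with ha_def
  set n := cross3 u w with hn_def
  have hn0 : n 0 = u 1 * w 2 - u 2 * w 1 := rfl
  have hn1 : n 1 = u 2 * w 0 - u 0 * w 2 := rfl
  have hn2 : n 2 = u 0 * w 1 - u 1 * w 0 := rfl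
  have huu : (0:ℝ) < inner ℝ u u :=
    real_inner_self_nonneg.lt_of_ne fun h => h3 ((inner_self_eq_zero (𝕜 := ℝ)).1 h.symm)
  have hnn : (0:ℝ) < inner ℝ n n :=
    real_inner_self_nonneg.lt_of_ne fun h => h4 ((inner_self_eq_zero (𝕜 := ℝ)).1 h.symm)
  have hl : (inner ℝ u u : ℝ) * (inner ℝ w w : ℝ) - (inner ℝ u w : ℝ)^2 = (inner ℝ n n : ℝ) := by
    simp only [inner3, hn0, hn1, hn2]; ring
  have hD : (0:ℝ) < (inner ℝ u u : ℝ) * (inner ℝ w w : ℝ) - (inner ℝ u w : ℝ)^2 := by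
    rw [hl]; exact hnn
  have hA : axialA f q =
      ((inner ℝ u u : ℝ) * ((inner ℝ u u : ℝ) * (inner ℝ w w : ℝ) - (inner ℝ u w : ℝ)^2)) ^ (-(3:ℝ)/2) *
      (((inner ℝ u a : ℝ) * (inner ℝ u w : ℝ) - (inner ℝ u u : ℝ) * (inner ℝ a w : ℝ)) *
        ((inner ℝ u w : ℝ)^2 - (inner ℝ u u : ℝ) * (inner ℝ w w : ℝ))) := by
    simp only [axialA, ← hu_def, ← hw_def, ← ha_def, h2, inner_zero_right, inner_zero_left,
      mul_zero, zero_mul, sub_zero, zero_sub, neg_zero, ne_eq, OfNat.ofNat_ne_zero,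
      not_false_eq_true, zero_pow]
  have hC : (0:ℝ) < ((inner ℝ u u : ℝ) * ((inner ℝ u u : ℝ) * (inner ℝ w w : ℝ) - (inner ℝ u w : ℝ)^2)) ^ (-(3:ℝ)/2) :=
    Real.rpow_pos_of_pos (mul_pos huu hD) _
  have hD' : ((inner ℝ u w : ℝ)^2 - (inner ℝ u u : ℝ) * (inner ℝ w w : ℝ)) ≠ 0 := by
    have : (inner ℝ u w : ℝ)^2 - (inner ℝ u u : ℝ) * (inner ℝ w w : ℝ) < 0 := by linarith
    exact this.ne
  have iff1 : axialA f q = 0 ↔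
      (inner ℝ u a : ℝ) * (inner ℝ u w : ℝ) - (inner ℝ u u : ℝ) * (inner ℝ a w : ℝ) = 0 := by
    rw [hA]
    constructor
    · intro h
      rcases mul_eq_zero.1 h with h | h
      · exact absurd h hC.ne'
      · rcases mul_eq_zero.1 h with h | h
        · exact h
        · exact absurd h hD'
    · intro h; rw [h, zero_mul, mul_zero]
  have e1 : (inner ℝ fuuP w : ℝ) =
      (inner ℝ a w : ℝ) - ((inner ℝ a u : ℝ) / (inner ℝ u u : ℝ)) * (inner ℝ u w : ℝ) := by
    rw [hfuuP]; rw [inner_sub_left, real_inner_smul_left]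
  have hPu : (inner ℝ fuuP u : ℝ) = 0 := by
    rw [hfuuP, inner_sub_left, real_inner_smul_left, div_mul_cancel₀ _ huu.ne', sub_self]
  have hmul : (inner ℝ u u : ℝ) * (inner ℝ fuuP w : ℝ) =
      -((inner ℝ u a : ℝ) * (inner ℝ u w : ℝ) - (inner ℝ u u : ℝ) * (inner ℝ a w : ℝ)) := by
    have h5 : (inner ℝ a u : ℝ) / (inner ℝ u u : ℝ) * (inner ℝ u u : ℝ) = inner ℝ a u :=
      div_mul_cancel₀ _ huu.ne'
    have hcomm : (inner ℝ u a : ℝ) = inner ℝ a u := real_inner_comm a u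
    rw [e1]
    linear_combination (-(inner ℝ u w : ℝ)) * h5 + (inner ℝ u w : ℝ) * hcomm
  have iff2 : (inner ℝ fuuP w : ℝ) = 0 ↔
      (inner ℝ u a : ℝ) * (inner ℝ u w : ℝ) - (inner ℝ u u : ℝ) * (inner ℝ a w : ℝ) = 0 := by
    constructor
    · intro h; rw [h, mul_zero] at hmul; linarith
    · intro h; rw [h] at hmul
      have := mul_eq_zero.1 (by linarith : (inner ℝ u u : ℝ) * (inner ℝ fuuP w : ℝ) = 0)
      rcases this with h' | h'
      · exact absurd h' huu.ne'
      · exact h'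
  have hspan : (∃ c : ℝ, fuuP = c • n) ↔ (inner ℝ fuuP w : ℝ) = 0 := by
    constructor
    · rintro ⟨c, rfl⟩
      rw [real_inner_smul_left]
      have hnw : (inner ℝ n w : ℝ) = 0 := by simp only [inner3, hn0, hn1, hn2]; ring
      rw [hnw, mul_zero]
    · intro h0
      refine ⟨(inner ℝ fuuP n : ℝ) / (inner ℝ n n : ℝ), ?_⟩
      have hu' : fuuP 0 * u 0 + fuuP 1 * u 1 + fuuP 2 * u 2 = 0 := by rw [← inner3]; exact hPu
      have hw' : fuuP 0 * w 0 + fuuP 1 * w 1 + fuuP 2 * w 2 = 0 := by rw [← inner3]; exact h0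
      obtain ⟨g0, g1, g2⟩ := aux_perp (u 0) (u 1) (u 2) (w 0) (w 1) (w 2)
        (fuuP 0) (fuuP 1) (fuuP 2) (n 0) (n 1) (n 2) hn0 hn1 hn2 hu' hw'
      ext i
      fin_cases i
      · show fuuP 0 = ((inner ℝ fuuP n : ℝ) / (inner ℝ n n : ℝ)) * n 0
        rw [div_mul_eq_mul_div, eq_div_iff hnn.ne', inner3, inner3]
        linear_combination g0
      · show fuuP 1 = ((inner ℝ fuuP n : ℝ) / (inner ℝ n n : ℝ)) * n 1
        rw [div_mul_eq_mul_div, eq_div_iff hnn.ne', inner3, inner3]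
        linear_combination g1
      · show fuuP 2 = ((inner ℝ fuuP n : ℝ) / (inner ℝ n n : ℝ)) * n 2
        rw [div_mul_eq_mul_div, eq_div_iff hnn.ne', inner3, inner3]
        linear_combination g2
  exact ⟨iff1.trans (iff2.symm.trans hspan.symm), hspan⟩
end
end

section
/- Let f : ℝ² → ℝ³ be a smooth map and q a point with f_v(q) = 0, f_u(q) ≠ 0, |f_vv(q)| = 1 and ⟨f_u(q), f_vv(q)⟩ = 0. Define h : ℝ² → ℝ by h(x) = ⟨f(x), f_vv(q)⟩. Then q is a critical point of h, the Hessian matrix of h at q equals [[⟨f_uu,f_vv⟩, ⟨f_uv,f_vv⟩],[⟨f_uv,f_vv⟩, 1]] (entries evaluated at q), and its determinant equals κ_a := ⟨f_uu,f_vv⟩(q) − ⟨f_uv,f_vv⟩(q)². Consequently, the Hessian of h at q is positive definite if and only if κ_a > 0, and is nondegenerate indefinite if and only if κ_a < 0. -/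
noncomputable section

section Aux

variable {E : Type*} [NormedAddCommGroup E] [NormedSpace ℝ E]
  {F : Type*} [NormedAddCommGroup F] [NormedSpace ℝ F]

private lemma fderiv_comp_clm (L : E →L[ℝ] F) (g : ℝ × ℝ → E) (x : ℝ × ℝ)
    (hg : DifferentiableAt ℝ g x) :
    fderiv ℝ (fun y => L (g y)) x = L.comp (fderiv ℝ g x) :=
  (L.hasFDerivAt.comp x hg.hasFDerivAt).fderiv

private lemma fderiv_pd_eq (g : ℝ × ℝ → E) (hg : Differentiable ℝ (fderiv ℝ g))
    (v : ℝ × ℝ) (q : ℝ × ℝ) :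
    fderiv ℝ (fun x => fderiv ℝ g x v) q = (fderiv ℝ (fderiv ℝ g) q).flip v := by
  have := fderiv_clm_apply (hg q) (differentiableAt_const v)
  simpa using this

end Aux

private lemma quadform (a b : ℝ) (x : Fin 2 → ℝ) :
    dotProduct x ((!![a, b; b, 1] : Matrix (Fin 2) (Fin 2) ℝ).mulVec x) =
      (x 1 + b * x 0) ^ 2 + (a - b ^ 2) * (x 0) ^ 2 := by
  simp [dotProduct, Matrix.mulVec, Fin.sum_univ_two]
  ring

private lemma herm2 (a b : ℝ) : (!![a, b; b, 1] : Matrix (Fin 2) (Fin 2) ℝ).IsHermitian := by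
  unfold Matrix.IsHermitian
  ext i j
  fin_cases i <;> fin_cases j <;> simp [Matrix.conjTranspose_apply]

private lemma vec_cases (x : Fin 2 → ℝ) (hx : x ≠ 0) : x 0 ≠ 0 ∨ x 1 ≠ 0 := by
  by_contra hc
  push_neg at hc
  exact hx (funext fun i => by fin_cases i <;> simp [hc.1, hc.2])

private lemma posdef2 (a b : ℝ) :
    (!![a, b; b, 1] : Matrix (Fin 2) (Fin 2) ℝ).PosDef ↔ a - b ^ 2 > 0 := by
  rw [Matrix.posDef_iff_dotProduct_mulVec]
  constructor
  · intro hp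
    have h := hp.2 (x := ![1, -b]) (by
      intro hc
      have := congrFun hc 0
      simp at this)
    rw [star_trivial, quadform] at h
    simpa using h
  · intro ha
    refine ⟨herm2 a b, fun x hx => ?_⟩
    rw [star_trivial, quadform]
    rcases vec_cases x hx with h0 | h1
    · have : 0 < (a - b ^ 2) * (x 0) ^ 2 := mul_pos ha (sq_pos_of_ne_zero h0)
      nlinarith [sq_nonneg (x 1 + b * x 0)]
    · rcases eq_or_ne (x 0) 0 with h0 | h0
      · have : 0 < (x 1) ^ 2 := sq_pos_of_ne_zero h1
        simp [h0]
        nlinarith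
      · have : 0 < (a - b ^ 2) * (x 0) ^ 2 := mul_pos ha (sq_pos_of_ne_zero h0)
        nlinarith [sq_nonneg (x 1 + b * x 0)]

private lemma indef2 (a b : ℝ) :
    ((!![a, b; b, 1] : Matrix (Fin 2) (Fin 2) ℝ).det ≠ 0 ∧
      (∃ x : Fin 2 → ℝ, 0 < dotProduct x
        ((!![a, b; b, 1] : Matrix (Fin 2) (Fin 2) ℝ).mulVec x)) ∧
      (∃ x : Fin 2 → ℝ, dotProduct x
        ((!![a, b; b, 1] : Matrix (Fin 2) (Fin 2) ℝ).mulVec x) < 0)) ↔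
    a - b ^ 2 < 0 := by
  have hdet : (!![a, b; b, 1] : Matrix (Fin 2) (Fin 2) ℝ).det = a - b ^ 2 := by
    rw [Matrix.det_fin_two_of]; ring
  constructor
  · rintro ⟨hd, -, x, hneg⟩
    rw [quadform] at hneg
    rw [hdet] at hd
    rcases lt_or_gt_of_ne hd with h | h
    · exact h
    · exfalso
      nlinarith [sq_nonneg (x 1 + b * x 0), sq_nonneg (x 0), mul_nonneg h.le (sq_nonneg (x 0))]
  · intro ha
    refine ⟨by rw [hdet]; exact ne_of_lt ha, ⟨![0, 1], ?_⟩, ⟨![1, -b], ?_⟩⟩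
    · rw [quadform]; norm_num
    · rw [quadform]; simpa using ha

/-- For the height function `h(x) = ⟨f(x), f_vv(q)⟩` in the axial direction
`v_a = f_vv(q)` (with `f_v(q) = 0`, `|f_vv(q)| = 1`, `⟨f_u(q), f_vv(q)⟩ = 0`), the point
`q` is critical, the Hessian of `h` at `q` equals
`[[⟨f_uu,f_vv⟩, ⟨f_uv,f_vv⟩], [⟨f_uv,f_vv⟩, 1]]`, its determinant is
`κ_a = ⟨f_uu,f_vv⟩ − ⟨f_uv,f_vv⟩²`, and it is positive definite iff `κ_a > 0` and
nondegenerate indefinite iff `κ_a < 0`. -/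
theorem stmt9 (f : ℝ × ℝ → EuclideanSpace ℝ (Fin 3)) (hf : ContDiff ℝ (⊤ : ℕ∞) f)
    (q : ℝ × ℝ) (h1 : pdv f q = 0) (h2 : pdu f q ≠ 0)
    (h3 : ‖pdv (pdv f) q‖ = 1) (h4 : (inner ℝ (pdu f q) (pdv (pdv f) q) : ℝ) = 0)
    (h : ℝ × ℝ → ℝ) (hh : ∀ x, h x = (inner ℝ (f x) (pdv (pdv f) q) : ℝ))
    (H : Matrix (Fin 2) (Fin 2) ℝ)
    (hH : H = !![pdu (pdu h) q, pdv (pdu h) q; pdu (pdv h) q, pdv (pdv h) q])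
    (κa : ℝ)
    (hκa : κa = (inner ℝ (pdu (pdu f) q) (pdv (pdv f) q) : ℝ) -
      ((inner ℝ (pdv (pdu f) q) (pdv (pdv f) q) : ℝ)) ^ 2) :
    fderiv ℝ h q = 0 ∧
    H = !![(inner ℝ (pdu (pdu f) q) (pdv (pdv f) q) : ℝ),
            (inner ℝ (pdv (pdu f) q) (pdv (pdv f) q) : ℝ);
            (inner ℝ (pdv (pdu f) q) (pdv (pdv f) q) : ℝ), 1] ∧
    H.det = κa ∧
    (H.PosDef ↔ κa > 0) ∧
    ((H.det ≠ 0 ∧ (∃ x : Fin 2 → ℝ, 0 < dotProduct x (H.mulVec x)) ∧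
        (∃ x : Fin 2 → ℝ, dotProduct x (H.mulVec x) < 0)) ↔ κa < 0) := by
  set w := pdv (pdv f) q with hw
  have hfd : Differentiable ℝ f := hf.differentiable (by simp)
  have hf' : ContDiff ℝ (⊤ : ℕ∞) (fderiv ℝ f) := hf.fderiv_right (by simp)
  have hf'd : Differentiable ℝ (fderiv ℝ f) := hf'.differentiable (by simp)
  set L : EuclideanSpace ℝ (Fin 3) →L[ℝ] ℝ := innerSL ℝ w with hL
  have hLval : ∀ y, L y = (inner ℝ y w : ℝ) := fun y => by
    rw [hL]; simp only [innerSL_apply_apply]; exact real_inner_comm y w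
  have hhL : h = fun x => L (f x) := by
    funext x; rw [hh x, hLval]
  -- second derivative of f
  set F'' := fderiv ℝ (fderiv ℝ f) q with hF''
  have hsymm : F'' (1, 0) (0, 1) = F'' (0, 1) (1, 0) :=
    second_derivative_symmetric (fun y => (hfd y).hasFDerivAt) (hf'd q).hasFDerivAt _ _
  have hpd : ∀ v : ℝ × ℝ, fderiv ℝ (fun x => fderiv ℝ f x v) q = F''.flip v :=
    fun v => fderiv_pd_eq f hf'd v q
  have hpvu : pdv (pdu f) q = F'' (0, 1) (1, 0) := by
    show fderiv ℝ (fun x => fderiv ℝ f x (1, 0)) q (0, 1) = _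
    rw [hpd]; rfl
  have hpuv : pdu (pdv f) q = F'' (1, 0) (0, 1) := by
    show fderiv ℝ (fun x => fderiv ℝ f x (0, 1)) q (1, 0) = _
    rw [hpd]; rfl
  have hmixed : pdu (pdv f) q = pdv (pdu f) q := by rw [hpuv, hpvu, hsymm]
  -- derivative of h
  have hdh : ∀ x, fderiv ℝ h x = L.comp (fderiv ℝ f x) := by
    intro x; rw [hhL]; exact fderiv_comp_clm L f x (hfd x)
  have hcrit : fderiv ℝ h q = 0 := by
    rw [hdh]
    refine ContinuousLinearMap.ext fun v => ?_
    have hv : v = v.1 • ((1 : ℝ), (0 : ℝ)) + v.2 • ((0 : ℝ), (1 : ℝ)) := by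
      simp [Prod.ext_iff]
    have hdec : fderiv ℝ f q v = v.1 • pdu f q + v.2 • pdv f q := by
      conv_lhs => rw [hv]
      rw [map_add, map_smul, map_smul]; rfl
    simp only [ContinuousLinearMap.comp_apply, hdec, h1, smul_zero, add_zero,
      map_smul, ContinuousLinearMap.zero_apply]
    rw [hLval]
    simp [h4]
  -- differentiability of first partials of f
  have hgu : Differentiable ℝ (pdu f) := fun x =>
    (hf'd x).clm_apply (differentiableAt_const _)
  have hgv : Differentiable ℝ (pdv f) := fun x =>
    (hf'd x).clm_apply (differentiableAt_const _)
  -- first partials of h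
  have hpduh : pdu h = fun x => L (pdu f x) := by
    funext x
    show fderiv ℝ h x (1, 0) = _
    rw [hdh x]; rfl
  have hpdvh : pdv h = fun x => L (pdv f x) := by
    funext x
    show fderiv ℝ h x (0, 1) = _
    rw [hdh x]; rfl
  -- second partials of h
  have huu : pdu (pdu h) q = (inner ℝ (pdu (pdu f) q) w : ℝ) := by
    show fderiv ℝ (pdu h) q (1, 0) = _
    rw [hpduh, fderiv_comp_clm L (pdu f) q (hgu q)]
    exact hLval _
  have hvu : pdv (pdu h) q = (inner ℝ (pdv (pdu f) q) w : ℝ) := by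
    show fderiv ℝ (pdu h) q (0, 1) = _
    rw [hpduh, fderiv_comp_clm L (pdu f) q (hgu q)]
    exact hLval _
  have huv : pdu (pdv h) q = (inner ℝ (pdv (pdu f) q) w : ℝ) := by
    show fderiv ℝ (pdv h) q (1, 0) = _
    rw [hpdvh, fderiv_comp_clm L (pdv f) q (hgv q)]
    rw [← hmixed]
    exact hLval _
  have hvv : pdv (pdv h) q = 1 := by
    show fderiv ℝ (pdv h) q (0, 1) = _
    rw [hpdvh, fderiv_comp_clm L (pdv f) q (hgv q)]
    have : (L.comp (fderiv ℝ (pdv f) q)) (0, 1) = L (pdv (pdv f) q) := rfl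
    rw [this, hLval, ← hw, real_inner_self_eq_norm_sq, h3]
    norm_num
  set a : ℝ := (inner ℝ (pdu (pdu f) q) w : ℝ) with ha
  set b : ℝ := (inner ℝ (pdv (pdu f) q) w : ℝ) with hb
  have hHeq : H = !![a, b; b, 1] := by
    rw [hH, huu, hvu, huv, hvv]
  have hκ : κa = a - b ^ 2 := hκa
  refine ⟨hcrit, hHeq, ?_, ?_, ?_⟩
  · rw [hHeq, Matrix.det_fin_two_of, hκ]; ring
  · rw [hHeq, hκ]; exact posdef2 a b
  · rw [hHeq, hκ]; exact indef2 a b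
end
end

section
/- Let f : ℝ² → ℝ³ be a smooth map and q a point with f_v(q) = 0, f_u(q) ≠ 0, |f_vv(q)| = 1 and ⟨f_u(q), f_vv(q)⟩ = 0, and let h(x) = ⟨f(x), f_vv(q)⟩. Set m = ⟨f_uv, f_vv⟩(q) and assume κ_a := ⟨f_uu,f_vv⟩(q) − m² = 0. Define D : ℝ² → ℝ by D = h_uu·h_vv − (h_uv)². Then (−∂_u D + m·∂_v D)(q) = −⟨f_uuu,f_vv⟩(q) + 3·⟨f_uuv,f_vv⟩(q)·m − 3·⟨f_uvv,f_vv⟩(q)·m² + ⟨f_vvv,f_vv⟩(q)·m³. -/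
noncomputable section
section helpers
variable {E : Type*} [NormedAddCommGroup E] [NormedSpace ℝ E]
variable {F : Type*} [NormedAddCommGroup F] [NormedSpace ℝ F]

lemma contDiff_pdu {f : ℝ × ℝ → E} (hf : ContDiff ℝ (⊤ : ℕ∞) f) : ContDiff ℝ (⊤ : ℕ∞) (pdu f) :=
  (ContinuousLinearMap.apply ℝ E ((1:ℝ), (0:ℝ))).contDiff.comp (hf.fderiv_right (by simp))

lemma contDiff_pdv {f : ℝ × ℝ → E} (hf : ContDiff ℝ (⊤ : ℕ∞) f) : ContDiff ℝ (⊤ : ℕ∞) (pdv f) :=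
  (ContinuousLinearMap.apply ℝ E ((0:ℝ), (1:ℝ))).contDiff.comp (hf.fderiv_right (by simp))

lemma pdu_clm (L : E →L[ℝ] F) {f : ℝ × ℝ → E} (hf : ContDiff ℝ (⊤ : ℕ∞) f) :
    pdu (fun x => L (f x)) = fun x => L (pdu f x) := by
  funext x
  have h := (L.hasFDerivAt.comp x (hf.differentiable (by simp) x).hasFDerivAt).fderiv
  simp only [pdu, Function.comp_def] at h ⊢
  rw [h]; rfl

lemma pdv_clm (L : E →L[ℝ] F) {f : ℝ × ℝ → E} (hf : ContDiff ℝ (⊤ : ℕ∞) f) :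
    pdv (fun x => L (f x)) = fun x => L (pdv f x) := by
  funext x
  have h := (L.hasFDerivAt.comp x (hf.differentiable (by simp) x).hasFDerivAt).fderiv
  simp only [pdv, Function.comp_def] at h ⊢
  rw [h]; rfl

lemma pdu_pdv_comm {f : ℝ × ℝ → E} (hf : ContDiff ℝ (⊤ : ℕ∞) f) : pdu (pdv f) = pdv (pdu f) := by
  funext x
  have hd : ContDiff ℝ (⊤ : ℕ∞) (fderiv ℝ f) := hf.fderiv_right (by simp)
  have h1 : pdu (pdv f) x = fderiv ℝ (fderiv ℝ f) x (1,0) (0,1) := by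
    have e : pdv f = fun y => (ContinuousLinearMap.apply ℝ E ((0:ℝ),(1:ℝ))) (fderiv ℝ f y) := rfl
    rw [e, pdu_clm _ hd]; rfl
  have h2 : pdv (pdu f) x = fderiv ℝ (fderiv ℝ f) x (0,1) (1,0) := by
    have e : pdu f = fun y => (ContinuousLinearMap.apply ℝ E ((1:ℝ),(0:ℝ))) (fderiv ℝ f y) := rfl
    rw [e, pdv_clm _ hd]; rfl
  have hs := (hf.contDiffAt (x := x)).isSymmSndFDerivAt (n := (⊤ : ℕ∞)) (by rw [minSmoothness_of_isRCLikeNormedField]; exact WithTop.coe_le_coe.mpr (le_top : (2 : ℕ∞) ≤ ⊤))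
  rw [h1, h2, hs (1,0) (0,1)]

lemma pdu_mul {a b : ℝ × ℝ → ℝ} {q : ℝ × ℝ} (ha : DifferentiableAt ℝ a q)
    (hb : DifferentiableAt ℝ b q) :
    pdu (fun x => a x * b x) q = pdu a q * b q + a q * pdu b q := by
  simp only [pdu, fderiv_fun_mul ha hb, ContinuousLinearMap.add_apply,
    ContinuousLinearMap.smul_apply, smul_eq_mul]
  ring

lemma pdv_mul {a b : ℝ × ℝ → ℝ} {q : ℝ × ℝ} (ha : DifferentiableAt ℝ a q)
    (hb : DifferentiableAt ℝ b q) :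
    pdv (fun x => a x * b x) q = pdv a q * b q + a q * pdv b q := by
  simp only [pdv, fderiv_fun_mul ha hb, ContinuousLinearMap.add_apply,
    ContinuousLinearMap.smul_apply, smul_eq_mul]
  ring

lemma pdu_sub {a b : ℝ × ℝ → ℝ} {q : ℝ × ℝ} (ha : DifferentiableAt ℝ a q)
    (hb : DifferentiableAt ℝ b q) :
    pdu (fun x => a x - b x) q = pdu a q - pdu b q := by
  simp only [pdu, fderiv_fun_sub ha hb, ContinuousLinearMap.sub_apply]

lemma pdv_sub {a b : ℝ × ℝ → ℝ} {q : ℝ × ℝ} (ha : DifferentiableAt ℝ a q)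
    (hb : DifferentiableAt ℝ b q) :
    pdv (fun x => a x - b x) q = pdv a q - pdv b q := by
  simp only [pdv, fderiv_fun_sub ha hb, ContinuousLinearMap.sub_apply]
end helpers

/-- With `h(x) = ⟨f(x), f_vv(q)⟩` the height function in the axial
direction, `m = ⟨f_uv,f_vv⟩(q)`, `κ_a = ⟨f_uu,f_vv⟩(q) − m² = 0`, and
`D = h_uu·h_vv − h_uv²` the Hessian determinant, the derivative of `D` in the kernel
direction `(−1, m)` of the Hessian at `q` equals
`−⟨f_uuu,f_vv⟩ + 3⟨f_uuv,f_vv⟩·m − 3⟨f_uvv,f_vv⟩·m² + ⟨f_vvv,f_vv⟩·m³` at `q`. -/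
theorem stmt10 (f : ℝ × ℝ → EuclideanSpace ℝ (Fin 3)) (hf : ContDiff ℝ (⊤ : ℕ∞) f)
    (q : ℝ × ℝ) (h1 : pdv f q = 0) (h2 : pdu f q ≠ 0)
    (h3 : ‖pdv (pdv f) q‖ = 1) (h4 : (inner ℝ (pdu f q) (pdv (pdv f) q) : ℝ) = 0)
    (h : ℝ × ℝ → ℝ) (hh : ∀ x, h x = (inner ℝ (f x) (pdv (pdv f) q) : ℝ))
    (m : ℝ) (hm : m = (inner ℝ (pdv (pdu f) q) (pdv (pdv f) q) : ℝ))
    (hκa : (inner ℝ (pdu (pdu f) q) (pdv (pdv f) q) : ℝ) - m ^ 2 = 0)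
    (D : ℝ × ℝ → ℝ)
    (hD : ∀ x, D x = pdu (pdu h) x * pdv (pdv h) x - (pdv (pdu h) x) ^ 2) :
    -(pdu D q) + m * pdv D q =
      -(inner ℝ (pdu (pdu (pdu f)) q) (pdv (pdv f) q) : ℝ) +
        3 * (inner ℝ (pdv (pdu (pdu f)) q) (pdv (pdv f) q) : ℝ) * m -
        3 * (inner ℝ (pdv (pdv (pdu f)) q) (pdv (pdv f) q) : ℝ) * m ^ 2 +
        (inner ℝ (pdv (pdv (pdv f)) q) (pdv (pdv f) q) : ℝ) * m ^ 3 := by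
  set w : EuclideanSpace ℝ (Fin 3) := pdv (pdv f) q with hwdef
  set L : EuclideanSpace ℝ (Fin 3) →L[ℝ] ℝ := innerSL ℝ w with hLdef
  have hLapp : ∀ v : EuclideanSpace ℝ (Fin 3), L v = (inner ℝ v w : ℝ) := fun v => by
    rw [hLdef, innerSL_apply_apply, real_inner_comm]
  -- smoothness
  have hfu : ContDiff ℝ (⊤ : ℕ∞) (pdu f) := contDiff_pdu hf
  have hfv : ContDiff ℝ (⊤ : ℕ∞) (pdv f) := contDiff_pdv hf
  have hfuu : ContDiff ℝ (⊤ : ℕ∞) (pdu (pdu f)) := contDiff_pdu hfu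
  have hfuv : ContDiff ℝ (⊤ : ℕ∞) (pdv (pdu f)) := contDiff_pdv hfu
  have hfvv : ContDiff ℝ (⊤ : ℕ∞) (pdv (pdv f)) := contDiff_pdv hfv
  -- h in CLM form
  have hhf : h = fun x => L (f x) := by
    funext x; rw [hh, hLapp]
  have hu : pdu h = fun x => L (pdu f x) := by rw [hhf]; exact pdu_clm L hf
  have hvf : pdv h = fun x => L (pdv f x) := by rw [hhf]; exact pdv_clm L hf
  have huu : pdu (pdu h) = fun x => L (pdu (pdu f) x) := by rw [hu]; exact pdu_clm L hfu
  have huv : pdv (pdu h) = fun x => L (pdv (pdu f) x) := by rw [hu]; exact pdv_clm L hfu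
  have hvv : pdv (pdv h) = fun x => L (pdv (pdv f) x) := by rw [hvf]; exact pdv_clm L hfv
  -- component functions
  set A : ℝ × ℝ → ℝ := fun x => L (pdu (pdu f) x) with hA
  set B : ℝ × ℝ → ℝ := fun x => L (pdv (pdv f) x) with hB
  set C : ℝ × ℝ → ℝ := fun x => L (pdv (pdu f) x) with hC
  have hDfun : D = fun x => A x * B x - C x * C x := by
    funext x; rw [hD, huu, hvv, huv]; simp [hA, hB, hC]; ring
  have hAc : ContDiff ℝ (⊤ : ℕ∞) A := L.contDiff.comp hfuu
  have hBc : ContDiff ℝ (⊤ : ℕ∞) B := L.contDiff.comp hfvv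
  have hCc : ContDiff ℝ (⊤ : ℕ∞) C := L.contDiff.comp hfuv
  have hAd := (hAc.differentiable (by simp)) q
  have hBd := (hBc.differentiable (by simp)) q
  have hCd := (hCc.differentiable (by simp)) q
  have hABd : DifferentiableAt ℝ (fun x => A x * B x) q := hAd.mul hBd
  have hCCd : DifferentiableAt ℝ (fun x => C x * C x) q := hCd.mul hCd
  -- derivatives of components
  have hAu : pdu A = fun x => L (pdu (pdu (pdu f)) x) := pdu_clm L hfuu
  have hAv : pdv A = fun x => L (pdv (pdu (pdu f)) x) := pdv_clm L hfuu
  have hBu : pdu B = fun x => L (pdv (pdv (pdu f)) x) := by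
    rw [pdu_clm L hfvv, pdu_pdv_comm hfv, pdu_pdv_comm hf]
  have hBv : pdv B = fun x => L (pdv (pdv (pdv f)) x) := pdv_clm L hfvv
  have hCu : pdu C = fun x => L (pdv (pdu (pdu f)) x) := by
    rw [pdu_clm L hfuv, pdu_pdv_comm hfu]
  have hCv : pdv C = fun x => L (pdv (pdv (pdu f)) x) := pdv_clm L hfuv
  -- key values
  have hb1 : B q = 1 := by
    simp only [hB, hLdef, innerSL_apply_apply, ← hwdef, real_inner_self_eq_norm_sq, h3]; norm_num
  have ha1 : A q = m ^ 2 := by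
    have := hκa; rw [← hLapp] at this; linarith
  have hc1 : C q = m := by rw [hm]; exact hLapp _
  -- compute pdu D, pdv D
  have hDu : pdu D q = pdu A q * B q + A q * pdu B q - (pdu C q * C q + C q * pdu C q) := by
    rw [hDfun, pdu_sub hABd hCCd, pdu_mul hAd hBd, pdu_mul hCd hCd]
  have hDv : pdv D q = pdv A q * B q + A q * pdv B q - (pdv C q * C q + C q * pdv C q) := by
    rw [hDfun, pdv_sub hABd hCCd, pdv_mul hAd hBd, pdv_mul hCd hCd]
  rw [hDu, hDv, hAu, hAv, hBu, hBv, hCu, hCv]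
  simp only [hb1, ha1, hc1]
  rw [show (inner ℝ (pdu (pdu (pdu f)) q) w : ℝ) = L (pdu (pdu (pdu f)) q) from (hLapp _).symm,
    show (inner ℝ (pdv (pdu (pdu f)) q) w : ℝ) = L (pdv (pdu (pdu f)) q) from (hLapp _).symm,
    show (inner ℝ (pdv (pdv (pdu f)) q) w : ℝ) = L (pdv (pdv (pdu f)) q) from (hLapp _).symm,
    show (inner ℝ (pdv (pdv (pdv f)) q) w : ℝ) = L (pdv (pdv (pdv f)) q) from (hLapp _).symm]
  ring
end
end
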